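/- arXiv:1910.08778 — 2 statements merged into one kernel-verified Lean document; each statement's English description precedes it below -/
import Mathlib

section
/- In a MeDIL causal model, for measurement vertices M_i, M_j, M_k: if M_i is d-separated from M_j given ∅ and M_i is d-separated from M_k given ∅, then M_i is d-separated from M_j given {M_k}. -/
/-- Skeleton adjacency of a directed graph given by edge relation `E`. -/
def SkelAdj {V : Type*} (E : V → V → Prop) (a b : V) : Prop := E a b ∨ E b a

/-- A path (in the skeleton) of the directed graph `E` is blocked by the
conditioning set `Z` if it contains an internal vertex `v` (with neighbors
`a`, `b` on the path) which is either a collider (both path edges point into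
`v`) none of whose descendants lies in `Z`, or a non-collider lying in `Z`. -/
def Blocked {V : Type*} (E : V → V → Prop) (Z : Set V) (p : List V) : Prop :=
  ∃ a v b : V, List.IsInfix [a, v, b] p ∧
    ((E a v ∧ E b v ∧ ∀ d, Relation.ReflTransGen E v d → d ∉ Z) ∨
     (¬(E a v ∧ E b v) ∧ v ∈ Z))

/-- `x` and `y` are d-connected given `Z` in the directed graph `E` if there is
an unblocked (repetition-free) skeleton path from `x` to `y`. -/
def DConn {V : Type*} (E : V → V → Prop) (Z : Set V) (x y : V) : Prop :=
  ∃ p : List V, p.Chain' (SkelAdj E) ∧ p.Nodup ∧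
    p.head? = some x ∧ p.getLast? = some y ∧ ¬ Blocked E Z p

/-- A measurement dependence inducing latent (MeDIL) causal model: a DAG whose
vertices are partitioned into latents `L` (out-degree ≥ 1) and measurements `M`
(out-degree 0, in-degree ≥ 1). -/
structure MCM (V : Type*) where
  E : V → V → Prop
  L : Set V
  M : Set V
  disjoint : Disjoint L M
  union : L ∪ M = Set.univ
  acyclic : ∀ v : V, ¬ Relation.TransGen E v v
  meas_sink : ∀ m ∈ M, ∀ v, ¬ E m v
  meas_indeg : ∀ m ∈ M, ∃ v, E v m
  lat_outdeg : ∀ l ∈ L, ∃ v, E l v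

/-!
On a path that is unblocked given `{z}`, every collider is an ancestor of `z`. Walk along such a
path from `x`: while its edges point back towards `x` we climb through ancestors of `x`; once an
edge points away, the path stays directed until it either reaches `y` or turns back at a
collider, from which `z` is reached. Either way `x` shares an ancestor with `y` or with `z`, and
in a DAG two vertices with a common ancestor are joined by a collider-free path, i.e. they are
d-connected given `∅`.
-/

open Relation

section

variable {V : Type*} {E : V → V → Prop}

def IsColliderFree (E : V → V → Prop) (p : List V) : Prop :=
  ∀ a v b, [a, v, b] <:+: p → ¬(E a v ∧ E b v)

def CollidersReach (E : V → V → Prop) (z : V) (p : List V) : Prop :=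
  ∀ a v b, [a, v, b] <:+: p → E a v → E b v → ReflTransGen E v z

lemma IsColliderFree.of_infix {p q : List V} (hp : IsColliderFree E p) (hq : q <:+: p) :
    IsColliderFree E q :=
  fun a v b h => hp a v b (h.trans hq)

lemma IsColliderFree.cons {u q : V} {S : List V} (hS : IsColliderFree E (u :: S))
    (hqu : ¬ E q u) : IsColliderFree E (q :: u :: S) := by
  rintro a v b h ⟨hav, hbv⟩
  rcases List.infix_cons_iff.mp h with hpre | hinf
  · obtain ⟨rfl, rfl, -⟩ := by simpa only [List.cons_prefix_cons] using hpre
    exact hqu hav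
  · exact hS a v b hinf ⟨hav, hbv⟩

lemma CollidersReach.of_cons {z x : V} {p : List V} (h : CollidersReach E z (x :: p)) :
    CollidersReach E z p :=
  fun a v b hi => h a v b (List.infix_cons hi)

lemma not_blocked_empty_iff {p : List V} : ¬ Blocked E ∅ p ↔ IsColliderFree E p := by
  simp [Blocked, IsColliderFree]

lemma collidersReach_of_not_blocked_singleton {z : V} {p : List V}
    (hnb : ¬ Blocked E {z} p) : CollidersReach E z p := by
  intro a v b hi hav hbv
  by_contra hvz
  exact hnb ⟨a, v, b, hi, .inl ⟨hav, hbv, fun d hvd hd => hvz (Set.mem_singleton_iff.mp hd ▸ hvd)⟩⟩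

lemma Blocked.reverse {Z : Set V} {p : List V} (h : Blocked E Z p) : Blocked E Z p.reverse := by
  obtain ⟨a, v, b, hi, hblock⟩ := h
  refine ⟨b, v, a, by simpa using List.reverse_infix.mpr hi, ?_⟩
  rcases hblock with ⟨hav, hbv, hZ⟩ | ⟨hcol, hv⟩
  · exact .inl ⟨hbv, hav, hZ⟩
  · exact .inr ⟨fun h => hcol ⟨h.2, h.1⟩, hv⟩

theorem DConn.symm {Z : Set V} {x y : V} (h : DConn E Z x y) : DConn E Z y x := by
  obtain ⟨p, hc, hn, hh, hl, hnb⟩ := h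
  refine ⟨p.reverse, List.isChain_reverse.mpr (hc.imp fun _ _ => Or.symm),
    List.nodup_reverse.mpr hn, by rwa [List.head?_reverse], by rwa [List.getLast?_reverse],
    fun hb => hnb ?_⟩
  simpa using hb.reverse

lemma dConn_empty_refl (x : V) : DConn E ∅ x x :=
  ⟨[x], List.isChain_singleton x, List.nodup_singleton x, rfl, rfl,
    not_blocked_empty_iff.mpr fun _ _ _ h => by simpa using h.length_le⟩

/-- Cut the path at `q` if it already passes through `q`; otherwise prepend `q`, which creates
no collider at `u` because `q → u` would close a cycle. -/
lemma DConn.of_edge_head (acyc : ∀ v, ¬ TransGen E v v) {u q y : V}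
    (h : DConn E ∅ u y) (huq : E u q) : DConn E ∅ q y := by
  obtain ⟨S, hc, hn, hh, hl, hnb⟩ := h
  rw [not_blocked_empty_iff] at hnb
  by_cases hq : q ∈ S
  · obtain ⟨s, t, rfl⟩ := List.append_of_mem hq
    have hsuf : (q :: t) <:+: s ++ q :: t := (List.suffix_append s (q :: t)).isInfix
    exact ⟨q :: t, hc.infix hsuf, hn.sublist hsuf.sublist, rfl,
      by rwa [List.getLast?_append_cons] at hl,
      not_blocked_empty_iff.mpr (hnb.of_infix hsuf)⟩
  · obtain ⟨S, rfl⟩ : ∃ S', S = u :: S' := by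
      cases S with
      | nil => simp at hh
      | cons s S' => exact ⟨S', by simpa using hh⟩
    refine ⟨q :: u :: S, List.isChain_cons_cons.mpr ⟨.inr huq, hc⟩,
      List.nodup_cons.mpr ⟨hq, hn⟩, rfl, by rwa [List.getLast?_cons_cons],
      not_blocked_empty_iff.mpr (hnb.cons fun hqu => acyc u ?_)⟩
    exact (TransGen.single huq).tail hqu

lemma DConn.of_reflTransGen_head (acyc : ∀ v, ¬ TransGen E v v) {u x y : V}
    (hux : ReflTransGen E u x) (h : DConn E ∅ u y) : DConn E ∅ x y := by
  induction hux with
  | refl => exact h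
  | tail _ hbc ih => exact ih.of_edge_head acyc hbc

lemma dConn_empty_of_reflTransGen (acyc : ∀ v, ¬ TransGen E v v) {w x y : V}
    (hx : ReflTransGen E w x) (hy : ReflTransGen E w y) : DConn E ∅ x y :=
  ((dConn_empty_refl w).of_reflTransGen_head acyc hy).symm.of_reflTransGen_head acyc hx

lemma reflTransGen_or_of_isChain_of_edge_head {z x x' y : V} {p : List V}
    (hc : (x :: x' :: p).IsChain (SkelAdj E)) (hcol : CollidersReach E z (x :: x' :: p))
    (hxx' : E x x') (hl : (x' :: p).getLast? = some y) :
    ReflTransGen E x y ∨ ReflTransGen E x z := by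
  induction p generalizing x x' with
  | nil =>
    obtain rfl : x' = y := by simpa using hl
    exact .inl (.single hxx')
  | cons b p ih =>
    obtain ⟨-, hc'⟩ := List.isChain_cons_cons.mp hc
    rcases (List.isChain_cons_cons.mp hc').1 with hx'b | hbx'
    · rcases ih hc' hcol.of_cons hx'b (by rwa [List.getLast?_cons_cons] at hl) with hy | hz
      · exact .inl (.head hxx' hy)
      · exact .inr (.head hxx' hz)
    · exact .inr (.head hxx' (hcol x x' b ⟨[], p, rfl⟩ hxx' hbx'))

lemma exists_common_ancestor_of_isChain {z x y : V} {p : List V}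
    (hc : (x :: p).IsChain (SkelAdj E)) (hcol : CollidersReach E z (x :: p))
    (hl : (x :: p).getLast? = some y) :
    ∃ w, ReflTransGen E w x ∧ (ReflTransGen E w y ∨ ReflTransGen E w z) := by
  induction p generalizing x with
  | nil =>
    obtain rfl : x = y := by simpa using hl
    exact ⟨x, .refl, .inl .refl⟩
  | cons x' p ih =>
    rw [List.getLast?_cons_cons] at hl
    obtain ⟨hxx' | hx'x, hc'⟩ := List.isChain_cons_cons.mp hc
    · exact ⟨x, .refl, reflTransGen_or_of_isChain_of_edge_head hc hcol hxx' hl⟩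
    · obtain ⟨w, hwx', hw⟩ := ih hc' hcol.of_cons hl
      exact ⟨w, hwx'.tail hx'x, hw⟩

theorem dConn_empty_or_of_dConn_singleton (acyc : ∀ v, ¬ TransGen E v v) {x y z : V}
    (h : DConn E {z} x y) : DConn E ∅ x y ∨ DConn E ∅ x z := by
  obtain ⟨p, hc, -, hh, hl, hnb⟩ := h
  obtain ⟨p, rfl⟩ : ∃ p', p = x :: p' := by
    cases p with
    | nil => simp at hh
    | cons s p' => exact ⟨p', by simpa using hh⟩
  obtain ⟨w, hwx, hwy | hwz⟩ :=
    exists_common_ancestor_of_isChain hc (collidersReach_of_not_blocked_singleton hnb) hl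
  · exact .inl (dConn_empty_of_reflTransGen acyc hwx hwy)
  · exact .inr (dConn_empty_of_reflTransGen acyc hwx hwz)

end

theorem dsep_given_singleton_general {V : Type*} (G : MCM V) (Mi Mj Mk : V)
    (hsepj : ¬ DConn G.E ∅ Mi Mj) (hsepk : ¬ DConn G.E ∅ Mi Mk) :
    ¬ DConn G.E {Mk} Mi Mj :=
  fun h => (dConn_empty_or_of_dConn_singleton G.acyclic h).elim hsepj hsepk

/-- In a MeDIL causal model, if `Mi` is d-separated from `Mj` given `∅` and also
d-separated from `Mk` given `∅`, then `Mi` is d-separated from `Mj` given `{Mk}`. -/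
theorem dsep_given_singleton {V : Type*} (G : MCM V) (Mi Mj Mk : V)
    (hi : Mi ∈ G.M) (hj : Mj ∈ G.M) (hk : Mk ∈ G.M)
    (hij : Mi ≠ Mj) (hik : Mi ≠ Mk) (hjk : Mj ≠ Mk)
    (hsepj : ¬ DConn G.E ∅ Mi Mj) (hsepk : ¬ DConn G.E ∅ Mi Mk) :
    ¬ DConn G.E {Mk} Mi Mj :=
  dsep_given_singleton_general G Mi Mj Mk hsepj hsepk
end

section
/- The minimum number of clique-vertex assignments over all edge clique covers of a graph G (i.e., the minimum of the sum of clique sizes) is at least the intersection number of G, and can be strictly greater than achieved by a clique-minimum cover: there exists a graph for which no edge clique cover simultaneously minimizes the number of cliques and the total number of vertex-clique assignments. -/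
/-- `𝒞` is an edge clique cover of `G`: a family of cliques such that every
edge of `G` is contained in at least one clique of the family. -/
def IsECC {V : Type*} (G : SimpleGraph V) (𝒞 : Finset (Finset V)) : Prop :=
  (∀ C ∈ 𝒞, G.IsClique (C : Set V)) ∧
  ∀ u v : V, G.Adj u v → ∃ C ∈ 𝒞, u ∈ C ∧ v ∈ C

/-- The intersection number of `G`: the minimum number of cliques in an
edge clique cover of `G`. -/
noncomputable def interNum {V : Type*} (G : SimpleGraph V) : ℕ :=
  sInf {n | ∃ 𝒞 : Finset (Finset V), IsECC G 𝒞 ∧ 𝒞.card = n}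

/-- The assignment number of `G`: the minimum total number of vertex-clique
assignments (sum of clique sizes) over all edge clique covers of `G`. -/
noncomputable def assignNum {V : Type*} (G : SimpleGraph V) : ℕ :=
  sInf {n | ∃ 𝒞 : Finset (Finset V), IsECC G 𝒞 ∧ ∑ C ∈ 𝒞, C.card = n}

/-!
An assignment-minimum cover may be assumed to consist of nonempty cliques, each contributing at
least one assignment, so it has at least `interNum G` cliques and at least that many assignments.

For the 8-vertex example the optima are certified by LP duality: a weighting `w` of the edges
whose total weight inside every clique `C` is at most `f C` bounds `∑ C ∈ 𝒞, f C` from below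
by the total weight, for every edge clique cover `𝒞`. Weightings for `f = 1` and `f C = #C`
match covers with 7 cliques and with 21 assignments, and a weighting for `f C = 1 + #C` shows
`#𝒞 + ∑ C ∈ 𝒞, #C ≥ 29 > 7 + 21` for every cover.
-/

open Finset

section EdgeCliqueCover

variable {V : Type*} {G : SimpleGraph V} {𝒞 : Finset (Finset V)}

lemma interNum_le_card (h : IsECC G 𝒞) : interNum G ≤ #𝒞 :=
  Nat.sInf_le ⟨𝒞, h, rfl⟩

lemma assignNum_le_sum_card (h : IsECC G 𝒞) : assignNum G ≤ ∑ C ∈ 𝒞, #C :=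
  Nat.sInf_le ⟨𝒞, h, rfl⟩

lemma exists_isECC_card_eq_interNum (h : IsECC G 𝒞) :
    ∃ 𝒟, IsECC G 𝒟 ∧ #𝒟 = interNum G :=
  Nat.sInf_mem (s := {n | ∃ 𝒟 : Finset (Finset V), IsECC G 𝒟 ∧ #𝒟 = n})
    ⟨_, 𝒞, h, rfl⟩

lemma exists_isECC_sum_card_eq_assignNum (h : IsECC G 𝒞) :
    ∃ 𝒟, IsECC G 𝒟 ∧ ∑ C ∈ 𝒟, #C = assignNum G :=
  Nat.sInf_mem (s := {n | ∃ 𝒟 : Finset (Finset V), IsECC G 𝒟 ∧ ∑ C ∈ 𝒟, #C = n})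
    ⟨_, 𝒞, h, rfl⟩

lemma IsECC.filter_nonempty (h : IsECC G 𝒞) : IsECC G {C ∈ 𝒞 | C.Nonempty} := by
  refine ⟨fun C hC => h.1 C (mem_filter.1 hC).1, fun u v huv => ?_⟩
  obtain ⟨C, hC, hu, hv⟩ := h.2 u v huv
  exact ⟨C, mem_filter.2 ⟨hC, u, hu⟩, hu, hv⟩

lemma interNum_le_assignNum (G : SimpleGraph V) : interNum G ≤ assignNum G := by
  by_cases hG : ∃ 𝒞, IsECC G 𝒞
  · obtain ⟨𝒞, h, hsum⟩ := exists_isECC_sum_card_eq_assignNum hG.choose_spec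
    calc interNum G ≤ #{C ∈ 𝒞 | C.Nonempty} := interNum_le_card h.filter_nonempty
      _ = ∑ C ∈ 𝒞 with C.Nonempty, 1 := card_eq_sum_ones _
      _ ≤ ∑ C ∈ 𝒞 with C.Nonempty, #C :=
          sum_le_sum fun C hC => card_pos.2 (mem_filter.1 hC).2
      _ ≤ ∑ C ∈ 𝒞, #C := sum_le_sum_of_subset (filter_subset _ _)
      _ = assignNum G := hsum
  · have hempty : {n | ∃ 𝒞 : Finset (Finset V), IsECC G 𝒞 ∧ #𝒞 = n} = ∅ :=
      Set.eq_empty_of_forall_notMem fun _ ⟨𝒞, h, _⟩ => hG ⟨𝒞, h⟩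
    simp [interNum, hempty]

lemma IsECC.sum_weight_le [Fintype V] (h : IsECC G 𝒞) (w : V → V → ℕ)
    (hw : ∀ u v, w u v ≠ 0 → G.Adj u v) (f : Finset V → ℕ)
    (hf : ∀ C : Finset V, G.IsClique (C : Set V) → ∑ u ∈ C, ∑ v ∈ C, w u v ≤ f C) :
    ∑ u, ∑ v, w u v ≤ ∑ C ∈ 𝒞, f C := by
  classical
  have hcover (u v : V) : w u v ≤ ∑ C ∈ 𝒞, if u ∈ C ∧ v ∈ C then w u v else 0 := by
    obtain hzero | hne := eq_or_ne (w u v) 0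
    · exact hzero.trans_le (Nat.zero_le _)
    obtain ⟨C, hC, hu, hv⟩ := h.2 u v (hw u v hne)
    simpa [hu, hv] using single_le_sum (f := fun C => if u ∈ C ∧ v ∈ C then w u v else 0)
      (fun _ _ => Nat.zero_le _) hC
  calc ∑ u, ∑ v, w u v
      ≤ ∑ u, ∑ v, ∑ C ∈ 𝒞, if u ∈ C ∧ v ∈ C then w u v else 0 :=
        sum_le_sum fun u _ => sum_le_sum fun v _ => hcover u v
    _ = ∑ C ∈ 𝒞, ∑ u, ∑ v, if u ∈ C ∧ v ∈ C then w u v else 0 :=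
        (sum_congr rfl fun _ _ => sum_comm).trans sum_comm
    _ = ∑ C ∈ 𝒞, ∑ u ∈ C, ∑ v ∈ C, w u v := by simp [ite_and, sum_ite_mem]
    _ ≤ ∑ C ∈ 𝒞, f C := sum_le_sum fun C hC => hf C (h.1 C hC)

lemma le_interNum_of_weight [Fintype V] (hG : IsECC G 𝒞) (w : V → V → ℕ)
    (hw : ∀ u v, w u v ≠ 0 → G.Adj u v)
    (hclique : ∀ C : Finset V, G.IsClique (C : Set V) →
      ∑ u ∈ C, ∑ v ∈ C, w u v ≤ 1) :
    ∑ u, ∑ v, w u v ≤ interNum G := by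
  obtain ⟨𝒟, h, hcard⟩ := exists_isECC_card_eq_interNum hG
  calc ∑ u, ∑ v, w u v ≤ ∑ _ ∈ 𝒟, 1 := h.sum_weight_le w hw _ hclique
    _ = interNum G := by rw [sum_const, smul_eq_mul, mul_one, hcard]

lemma le_assignNum_of_weight [Fintype V] (hG : IsECC G 𝒞) (w : V → V → ℕ)
    (hw : ∀ u v, w u v ≠ 0 → G.Adj u v)
    (hclique : ∀ C : Finset V, G.IsClique (C : Set V) →
      ∑ u ∈ C, ∑ v ∈ C, w u v ≤ #C) :
    ∑ u, ∑ v, w u v ≤ assignNum G := by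
  obtain ⟨𝒟, h, hsum⟩ := exists_isECC_sum_card_eq_assignNum hG
  exact hsum ▸ h.sum_weight_le w hw _ hclique

end EdgeCliqueCover

section EnnisGraph

def ennisGraph : SimpleGraph (Fin 8) :=
  SimpleGraph.fromRel fun u v => (u.val, v.val) ∈
    [(0, 1), (0, 4), (0, 5), (0, 7), (1, 2), (1, 5), (1, 6), (1, 7), (2, 3), (2, 4), (2, 5),
     (3, 4), (3, 5), (3, 6), (3, 7), (4, 6), (4, 7), (5, 6), (6, 7)]

instance : DecidableRel ennisGraph.Adj := fun u v =>
  decidable_of_iff _ (SimpleGraph.fromRel_adj _ u v).symm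

-- Weights are listed on pairs `(u, v)` with `u < v` only, so `∑ u, ∑ v` counts each edge once.
def edgeWeight {n : ℕ} (l : List ((ℕ × ℕ) × ℕ)) (u v : Fin n) : ℕ :=
  (l.lookup (u.val, v.val)).getD 0

def cliqueMinCover : Finset (Finset (Fin 8)) :=
  {{0, 1, 5}, {0, 4, 7}, {1, 2, 5}, {1, 6, 7}, {2, 3, 4}, {3, 5, 6}, {3, 4, 6, 7}}

def assignMinCover : Finset (Finset (Fin 8)) :=
  {{0, 1, 7}, {0, 4}, {0, 5}, {1, 2}, {1, 5, 6}, {2, 3, 5}, {2, 4}, {3, 4, 6, 7}}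

set_option maxRecDepth 100000

lemma isECC_cliqueMinCover : IsECC ennisGraph cliqueMinCover := ⟨by decide, by decide⟩

lemma isECC_assignMinCover : IsECC ennisGraph assignMinCover := ⟨by decide, by decide⟩

lemma interNum_ennisGraph : interNum ennisGraph = 7 := by
  have hcard : #cliqueMinCover = 7 := by decide
  refine le_antisymm (hcard ▸ interNum_le_card isECC_cliqueMinCover) ?_
  let w : Fin 8 → Fin 8 → ℕ := edgeWeight
    [((0, 1), 1), ((0, 4), 1), ((1, 2), 1), ((1, 6), 1), ((2, 4), 1), ((3, 5), 1), ((3, 7), 1)]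
  have hw : ∀ u v, w u v ≠ 0 → ennisGraph.Adj u v := by decide
  have hclique : ∀ C : Finset (Fin 8), ennisGraph.IsClique (C : Set (Fin 8)) →
      ∑ u ∈ C, ∑ v ∈ C, w u v ≤ 1 := by decide
  have htotal : ∑ u, ∑ v, w u v = 7 := by decide
  exact htotal ▸ le_interNum_of_weight isECC_cliqueMinCover w hw hclique

lemma assignNum_ennisGraph : assignNum ennisGraph = 21 := by
  have hsum : ∑ C ∈ assignMinCover, #C = 21 := by decide
  refine le_antisymm (hsum ▸ assignNum_le_sum_card isECC_assignMinCover) ?_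
  let w : Fin 8 → Fin 8 → ℕ := edgeWeight
    [((0, 1), 1), ((0, 4), 2), ((0, 5), 2), ((0, 7), 1), ((1, 2), 2), ((1, 6), 2), ((1, 7), 1),
     ((2, 3), 1), ((2, 4), 2), ((2, 5), 1), ((3, 5), 1), ((3, 6), 1), ((3, 7), 2), ((4, 6), 1),
     ((5, 6), 1)]
  have hw : ∀ u v, w u v ≠ 0 → ennisGraph.Adj u v := by decide
  have hclique : ∀ C : Finset (Fin 8), ennisGraph.IsClique (C : Set (Fin 8)) →
      ∑ u ∈ C, ∑ v ∈ C, w u v ≤ #C := by decide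
  have htotal : ∑ u, ∑ v, w u v = 21 := by decide
  exact htotal ▸ le_assignNum_of_weight isECC_assignMinCover w hw hclique

lemma card_add_sum_card_ge_of_isECC_ennisGraph {𝒞 : Finset (Finset (Fin 8))}
    (h : IsECC ennisGraph 𝒞) : 29 ≤ #𝒞 + ∑ C ∈ 𝒞, #C := by
  let w : Fin 8 → Fin 8 → ℕ := edgeWeight
    [((0, 1), 1), ((0, 4), 3), ((0, 5), 3), ((0, 7), 1), ((1, 2), 3), ((1, 6), 2), ((1, 7), 2),
     ((2, 3), 1), ((2, 4), 3), ((2, 5), 1), ((3, 5), 2), ((3, 7), 3), ((4, 6), 2), ((5, 6), 2)]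
  have hw : ∀ u v, w u v ≠ 0 → ennisGraph.Adj u v := by decide
  have hclique : ∀ C : Finset (Fin 8), ennisGraph.IsClique (C : Set (Fin 8)) →
      ∑ u ∈ C, ∑ v ∈ C, w u v ≤ 1 + #C := by decide
  have htotal : ∑ u, ∑ v, w u v = 29 := by decide
  calc 29 = ∑ u, ∑ v, w u v := htotal.symm
    _ ≤ ∑ C ∈ 𝒞, (1 + #C) := h.sum_weight_le w hw _ hclique
    _ = #𝒞 + ∑ C ∈ 𝒞, #C := by rw [sum_add_distrib, card_eq_sum_ones]

end EnnisGraph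

/-- The minimum number of vertex-clique assignments over all edge clique covers
is at least the intersection number, and there is a graph for which no edge
clique cover simultaneously attains the minimum number of cliques and the
minimum number of assignments. -/
theorem interNum_le_assignNum_and_not_simultaneous :
    (∀ (V : Type) [Fintype V] [DecidableEq V] (G : SimpleGraph V),
      interNum G ≤ assignNum G) ∧
    ∃ (n : ℕ) (G : SimpleGraph (Fin n)),
      ¬ ∃ 𝒞 : Finset (Finset (Fin n)), IsECC G 𝒞 ∧
        𝒞.card = interNum G ∧ ∑ C ∈ 𝒞, C.card = assignNum G := by
  refine ⟨fun V _ _ G => interNum_le_assignNum G, 8, ennisGraph, ?_⟩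
  rintro ⟨𝒞, h, hcard, hsum⟩
  have := card_add_sum_card_ge_of_isECC_ennisGraph h
  rw [hcard, hsum, interNum_ennisGraph, assignNum_ennisGraph] at this
  omega
end
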